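/- arXiv:1610.10078 — 3 statements merged into one kernel-verified Lean document; each statement's English description precedes it below -/
import Mathlib

section
/- For every integer n ≥ 2, all 0 < γ₂ < γ₁, and every p ∈ (0,1): β_{n,γ₂}(p) < β_{n,γ₁}(p)^{γ₂/γ₁}. Equivalently, the function γ ↦ R_γ(p) := β_{n,γ}(p)^{1/γ}/p is strictly increasing in γ for fixed p ∈ (0,1). -/
/-!
Since `p · C(n-1,k) · n/(k+1) = C(n,k+1) · p`, the function `β_{n,γ}(p)` is the `γ`-th moment
`∑_{j=1}^{n} C(n,j) p^j (1-p)^{n-j} (j/n)^γ` of `j/n` against the binomial weights on `{1,…,n}`,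
whose total mass is `1 - (1-p)^n < 1`. The weighted Hölder inequality with exponent `γ₁/γ₂` gives
`β_{γ₂} ≤ (1 - (1-p)^n)^{1-γ₂/γ₁} β_{γ₁}^{γ₂/γ₁}`, and the missing mass makes it strict.
-/

open MeasureTheory Real Finset

/-- `theta n γ p = E[(n/N(p))^{1-γ}]` where `N(p)-1 ~ Bin(n-1,p)`. -/
noncomputable def theta (n : ℕ) (γ p : ℝ) : ℝ :=
  ∑ k ∈ Finset.range n,
    ((n - 1).choose k : ℝ) * p ^ k * (1 - p) ^ (n - 1 - k) *
      ((n : ℝ) / ((k : ℝ) + 1)) ^ (1 - γ)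

/-- `beta n γ p = p * theta n γ p`. -/
noncomputable def beta (n : ℕ) (γ p : ℝ) : ℝ := p * theta n γ p

/-- Optimal tontine payout function. -/
noncomputable def Dopt (n : ℕ) (γ r : ℝ) (p : ℝ → ℝ) (t : ℝ) : ℝ :=
  beta n γ (p t) ^ (1 / γ) /
    ∫ s in Set.Ioi (0 : ℝ), Real.exp (-r * s) * beta n γ (p s) ^ (1 / γ)

/-- Cumulative discounted payout of the optimal tontine. -/
noncomputable def Delta (n : ℕ) (γ r : ℝ) (p : ℝ → ℝ) (t : ℝ) : ℝ :=
  ∫ s in (0 : ℝ)..t, Real.exp (-r * s) * Dopt n γ r p s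

theorem sum_mul_rpow_lt_rpow_of_sum_lt_one {ι : Type*} (s : Finset ι) {w x : ι → ℝ}
    (hw : ∀ i, 0 ≤ w i) (hx : ∀ i, 0 ≤ x i) (hw₁ : ∑ i ∈ s, w i < 1) {a b : ℝ} (ha : 0 < a)
    (hab : a < b) (hpos : 0 < ∑ i ∈ s, w i * x i ^ b) :
    ∑ i ∈ s, w i * x i ^ a < (∑ i ∈ s, w i * x i ^ b) ^ (a / b) := by
  have hb : 0 < b := ha.trans hab
  have hpow : ∀ i, (x i ^ a) ^ (b / a) = x i ^ b := fun i => by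
    rw [← rpow_mul (hx i), mul_div_cancel₀ b ha.ne']
  have holder := inner_le_weight_mul_Lp_of_nonneg s ((one_le_div ha).2 hab.le) w
    (fun i => x i ^ a) hw (fun i => rpow_nonneg (hx i) a)
  simp only [hpow, inv_div] at holder
  calc ∑ i ∈ s, w i * x i ^ a
      ≤ (∑ i ∈ s, w i) ^ (1 - a / b) * (∑ i ∈ s, w i * x i ^ b) ^ (a / b) := holder
    _ < 1 * (∑ i ∈ s, w i * x i ^ b) ^ (a / b) := by
      gcongr
      exact rpow_lt_one (sum_nonneg fun i _ => hw i) hw₁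
        (sub_pos.2 ((div_lt_one hb).2 hab))
    _ = (∑ i ∈ s, w i * x i ^ b) ^ (a / b) := one_mul _

/-- `binomWeight n k p` is the probability that a `Binomial(n+1, p)` variable equals `k+1`. -/
noncomputable def binomWeight (n k : ℕ) (p : ℝ) : ℝ :=
  ((n + 1).choose (k + 1) : ℝ) * p ^ (k + 1) * (1 - p) ^ (n - k)

theorem binomWeight_nonneg (n k : ℕ) {p : ℝ} (hp₀ : 0 ≤ p) (hp₁ : p ≤ 1) :
    0 ≤ binomWeight n k p := by
  have : 0 ≤ 1 - p := sub_nonneg.2 hp₁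
  unfold binomWeight
  positivity

theorem sum_binomWeight (n : ℕ) (p : ℝ) :
    ∑ k ∈ range (n + 1), binomWeight n k p = 1 - (1 - p) ^ (n + 1) := by
  have h := add_pow p (1 - p) (n + 1)
  rw [add_sub_cancel, one_pow, sum_range_succ'] at h
  simp only [Nat.add_sub_add_right, pow_zero, Nat.sub_zero, Nat.choose_zero_right, Nat.cast_one,
    one_mul, mul_one] at h
  have hterms : ∑ k ∈ range (n + 1), binomWeight n k p
      = ∑ k ∈ range (n + 1), p ^ (k + 1) * (1 - p) ^ (n - k) * ((n + 1).choose (k + 1) : ℝ) :=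
    sum_congr rfl fun k _ => by unfold binomWeight; ring
  linarith

theorem beta_succ_eq_sum (n : ℕ) (γ p : ℝ) :
    beta (n + 1) γ p =
      ∑ k ∈ range (n + 1), binomWeight n k p * (((k : ℝ) + 1) / (n + 1)) ^ γ := by
  rw [beta, theta, mul_sum]
  refine sum_congr rfl fun k _ => ?_
  have hk : (0 : ℝ) < k + 1 := by positivity
  have hn : (0 : ℝ) < n + 1 := by positivity
  have hchoose : (n.choose k : ℝ) * ((n + 1) / (k + 1)) = (n + 1).choose (k + 1) := by
    rw [mul_div_assoc', div_eq_iff hk.ne']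
    exact_mod_cast (mul_comm _ _).trans (Nat.add_one_mul_choose_eq n k)
  have hrpow : (((n + 1 : ℕ) : ℝ) / (k + 1)) ^ (1 - γ)
      = (n + 1) / (k + 1) * (((k : ℝ) + 1) / (n + 1)) ^ γ := by
    push_cast
    rw [rpow_sub (by positivity), rpow_one, div_rpow hn.le hk.le, div_rpow hk.le hn.le]
    field_simp
  rw [hrpow, binomWeight, Nat.add_sub_cancel]
  linear_combination p ^ (k + 1) * (1 - p) ^ (n - k) * (((k : ℝ) + 1) / (n + 1)) ^ γ * hchoose

theorem beta_succ_pos (n : ℕ) (γ : ℝ) {p : ℝ} (hp₀ : 0 < p) (hp₁ : p < 1) :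
    0 < beta (n + 1) γ p := by
  rw [beta_succ_eq_sum]
  refine sum_pos (fun k hk => ?_) nonempty_range_add_one
  have hchoose : (0 : ℝ) < (n + 1).choose (k + 1) := by
    exact_mod_cast Nat.choose_pos (by simpa using hk)
  have : 0 < 1 - p := sub_pos.2 hp₁
  unfold binomWeight
  positivity

/-- for `0 < γ₂ < γ₁` and `0 < p < 1`, `β_{n,γ₂}(p) < β_{n,γ₁}(p)^{γ₂/γ₁}`;
equivalently `R_γ(p) = β_{n,γ}(p)^{1/γ}/p` is strictly increasing in `γ`. -/
theorem beta_holder_monotone_in_gamma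
    (n : ℕ) (hn : 2 ≤ n) (γ₁ γ₂ : ℝ) (hγ₂ : 0 < γ₂) (hγ : γ₂ < γ₁)
    (p : ℝ) (hp : p ∈ Set.Ioo (0 : ℝ) 1) :
    beta n γ₂ p < (beta n γ₁ p) ^ (γ₂ / γ₁) ∧
    (beta n γ₂ p) ^ (1 / γ₂) / p < (beta n γ₁ p) ^ (1 / γ₁) / p := by
  obtain ⟨hp₀, hp₁⟩ := hp
  obtain ⟨m, rfl⟩ : ∃ m, n = m + 1 := ⟨n - 1, by omega⟩
  have hβ₁ := beta_succ_pos m γ₁ hp₀ hp₁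
  have hβ₂ := beta_succ_pos m γ₂ hp₀ hp₁
  have hmass : ∑ k ∈ range (m + 1), binomWeight m k p < 1 := by
    rw [sum_binomWeight]
    linarith [pow_pos (sub_pos.2 hp₁) (m + 1)]
  have lyapunov : beta (m + 1) γ₂ p < beta (m + 1) γ₁ p ^ (γ₂ / γ₁) := by
    simp only [beta_succ_eq_sum] at hβ₁ ⊢
    exact sum_mul_rpow_lt_rpow_of_sum_lt_one _ (fun k => binomWeight_nonneg m k hp₀.le hp₁.le)
      (fun k => by positivity) hmass hγ₂ hγ hβ₁
  refine ⟨lyapunov, div_lt_div_of_pos_right ?_ hp₀⟩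
  calc beta (m + 1) γ₂ p ^ (1 / γ₂)
      < (beta (m + 1) γ₁ p ^ (γ₂ / γ₁)) ^ (1 / γ₂) := by gcongr
    _ = beta (m + 1) γ₁ p ^ (1 / γ₁) := by
      rw [← rpow_mul hβ₁.le]
      congr 1
      field_simp
end

section
/- Fix an integer n ≥ 2, γ₁ > γ₂ > 0, a rate r > 0, and a survival function t ↦ ₜp_x : [0,∞) → (0,1] which is continuous, strictly decreasing, with ₀p_x = 1 and ₜp_x → 0 as t → ∞. Suppose the function p ↦ R_{γ₁,γ₂}(p) := β_{n,γ₁}(p)^{1/γ₁} / β_{n,γ₂}(p)^{1/γ₂} is decreasing on (0,1]. Then Δ_{n,γ₁}(t) < Δ_{n,γ₂}(t) for every t > 0; i.e. the optimal tontine for the more risk-averse agent depletes its capital more slowly at every time. -/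
open MeasureTheory Real Finset

lemma sum_binom {n : ℕ} (hn : 1 ≤ n) (q : ℝ) :
    ∑ k ∈ Finset.range n, ((n - 1).choose k : ℝ) * q ^ k * (1 - q) ^ (n - 1 - k) = 1 := by
  have h := add_pow q (1 - q) (n - 1)
  rw [add_sub_cancel, one_pow, Nat.sub_add_cancel hn] at h
  calc ∑ k ∈ Finset.range n, ((n - 1).choose k : ℝ) * q ^ k * (1 - q) ^ (n - 1 - k)
      = ∑ k ∈ Finset.range n, q ^ k * (1 - q) ^ (n - 1 - k) * ((n - 1).choose k : ℝ) := by
        refine Finset.sum_congr rfl fun k _ => by ring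
    _ = 1 := h.symm

lemma theta_term_nonneg {n : ℕ} {γ q : ℝ} (h0 : 0 ≤ q) (h1 : q ≤ 1) (k : ℕ) :
    0 ≤ ((n - 1).choose k : ℝ) * q ^ k * (1 - q) ^ (n - 1 - k) *
      ((n : ℝ) / ((k : ℝ) + 1)) ^ (1 - γ) := by
  have : (0:ℝ) ≤ 1 - q := by linarith
  positivity

lemma theta_nonneg {n : ℕ} {γ q : ℝ} (h0 : 0 ≤ q) (h1 : q ≤ 1) : 0 ≤ theta n γ q :=
  Finset.sum_nonneg fun k _ => theta_term_nonneg h0 h1 k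

lemma theta_pos {n : ℕ} (hn : 1 ≤ n) {γ q : ℝ} (h0 : 0 < q) (h1 : q ≤ 1) :
    0 < theta n γ q := by
  have hmem : n - 1 ∈ Finset.range n := by
    simp [Nat.sub_lt (lt_of_lt_of_le Nat.zero_lt_one hn)]
  have hterm : ((n - 1).choose (n - 1) : ℝ) * q ^ (n - 1) * (1 - q) ^ (n - 1 - (n - 1)) *
      ((n : ℝ) / (((n - 1 : ℕ) : ℝ) + 1)) ^ (1 - γ) = q ^ (n - 1) := by
    have hc : ((n - 1 : ℕ) : ℝ) + 1 = (n : ℝ) := by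
      have : ((n - 1 : ℕ) : ℝ) = (n : ℝ) - 1 := by
        rw [Nat.cast_sub hn]; norm_num
      rw [this]; ring
    have hne : (n : ℝ) ≠ 0 := by positivity
    rw [hc, Nat.choose_self, Nat.sub_self, div_self hne, Real.one_rpow]
    norm_num
  have := Finset.single_le_sum (f := fun k =>
    ((n - 1).choose k : ℝ) * q ^ k * (1 - q) ^ (n - 1 - k) *
      ((n : ℝ) / ((k : ℝ) + 1)) ^ (1 - γ))
    (fun k _ => theta_term_nonneg h0.le h1 k) hmem
  calc (0:ℝ) < q ^ (n - 1) := by positivity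
    _ = _ := hterm.symm
    _ ≤ theta n γ q := this

lemma theta_le {n : ℕ} (hn : 1 ≤ n) {γ q : ℝ} (h0 : 0 ≤ q) (h1 : q ≤ 1) :
    theta n γ q ≤ max 1 ((n : ℝ) ^ (1 - γ)) := by
  set M := max 1 ((n : ℝ) ^ (1 - γ)) with hM
  have hq' : (0:ℝ) ≤ 1 - q := by linarith
  have key : ∀ k ∈ Finset.range n,
      ((n - 1).choose k : ℝ) * q ^ k * (1 - q) ^ (n - 1 - k) *
        ((n : ℝ) / ((k : ℝ) + 1)) ^ (1 - γ)
      ≤ ((n - 1).choose k : ℝ) * q ^ k * (1 - q) ^ (n - 1 - k) * M := by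
    intro k hk
    have hb0 : (0:ℝ) ≤ (n : ℝ) / ((k : ℝ) + 1) := by positivity
    have hb1 : (1:ℝ) ≤ (n : ℝ) / ((k : ℝ) + 1) := by
      rw [le_div_iff₀ (by positivity)]
      have : k + 1 ≤ n := Finset.mem_range.mp hk
      have := (Nat.cast_le (α := ℝ)).mpr this
      push_cast at this ⊢
      linarith
    have hbn : (n : ℝ) / ((k : ℝ) + 1) ≤ (n : ℝ) := by
      apply div_le_self (by positivity)
      have : (0:ℝ) ≤ (k : ℝ) := Nat.cast_nonneg k
      linarith
    have hbound : ((n : ℝ) / ((k : ℝ) + 1)) ^ (1 - γ) ≤ M := by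
      rcases le_or_gt (1 - γ) 0 with h | h
      · exact le_trans (Real.rpow_le_one_of_one_le_of_nonpos hb1 h) (le_max_left _ _)
      · exact le_trans (Real.rpow_le_rpow hb0 hbn h.le) (le_max_right _ _)
    have hnn : (0:ℝ) ≤ ((n - 1).choose k : ℝ) * q ^ k * (1 - q) ^ (n - 1 - k) := by positivity
    exact mul_le_mul_of_nonneg_left hbound hnn
  calc theta n γ q ≤ ∑ k ∈ Finset.range n,
        ((n - 1).choose k : ℝ) * q ^ k * (1 - q) ^ (n - 1 - k) * M :=
        Finset.sum_le_sum key
    _ = (∑ k ∈ Finset.range n,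
        ((n - 1).choose k : ℝ) * q ^ k * (1 - q) ^ (n - 1 - k)) * M := by
        rw [Finset.sum_mul]
    _ = M := by rw [sum_binom hn q, one_mul]

lemma theta_ge_of_le_half {n : ℕ} (hn : 1 ≤ n) {γ q : ℝ} (h0 : 0 ≤ q) (h1 : q ≤ 1/2) :
    ((2:ℝ)⁻¹) ^ (n - 1) * (n : ℝ) ^ (1 - γ) ≤ theta n γ q := by
  have hmem : (0 : ℕ) ∈ Finset.range n := by
    simpa using lt_of_lt_of_le Nat.zero_lt_one hn
  have hterm : ((n - 1).choose 0 : ℝ) * q ^ 0 * (1 - q) ^ (n - 1 - 0) *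
      ((n : ℝ) / (((0:ℕ) : ℝ) + 1)) ^ (1 - γ) = (1 - q) ^ (n - 1) * (n : ℝ) ^ (1 - γ) := by
    norm_num
  have h2 : ((2:ℝ)⁻¹) ^ (n - 1) ≤ (1 - q) ^ (n - 1) :=
    pow_le_pow_left₀ (by norm_num) (by linarith) _
  have := Finset.single_le_sum (f := fun k =>
    ((n - 1).choose k : ℝ) * q ^ k * (1 - q) ^ (n - 1 - k) *
      ((n : ℝ) / ((k : ℝ) + 1)) ^ (1 - γ))
    (fun k _ => theta_term_nonneg h0 (by linarith) k) hmem
  rw [hterm] at this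
  calc ((2:ℝ)⁻¹) ^ (n - 1) * (n : ℝ) ^ (1 - γ)
      ≤ (1 - q) ^ (n - 1) * (n : ℝ) ^ (1 - γ) := by
        apply mul_le_mul_of_nonneg_right h2 (by positivity)
    _ ≤ theta n γ q := this

lemma beta_pos {n : ℕ} (hn : 1 ≤ n) {γ q : ℝ} (h0 : 0 < q) (h1 : q ≤ 1) :
    0 < beta n γ q := mul_pos h0 (theta_pos hn h0 h1)

lemma beta_le {n : ℕ} (hn : 1 ≤ n) {γ q : ℝ} (h0 : 0 ≤ q) (h1 : q ≤ 1) :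
    beta n γ q ≤ max 1 ((n : ℝ) ^ (1 - γ)) * q := by
  rw [beta, mul_comm]
  exact mul_le_mul_of_nonneg_right (theta_le hn h0 h1) h0

lemma continuous_beta (n : ℕ) (γ : ℝ) : Continuous fun q => beta n γ q := by
  unfold beta theta
  fun_prop

lemma continuous_F (n : ℕ) {γ : ℝ} (hγ : 0 < γ) (r : ℝ) {p : ℝ → ℝ} (hcont : Continuous p) :
    Continuous fun s => Real.exp (-r * s) * beta n γ (p s) ^ (1 / γ) := by
  have h1 : Continuous fun x : ℝ => x ^ (1 / γ) :=
    continuous_iff_continuousAt.2 fun x =>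
      Real.continuousAt_rpow_const _ _ (Or.inr (by positivity))
  have h2 : Continuous fun s : ℝ => Real.exp (-r * s) := by fun_prop
  exact h2.mul (h1.comp ((continuous_beta n γ).comp hcont))

lemma integrableOn_F {n : ℕ} (hn : 1 ≤ n) {γ : ℝ} (hγ : 0 < γ) {r : ℝ} (hr : 0 < r)
    {p : ℝ → ℝ} (hcont : Continuous p) (hmem : ∀ t, 0 ≤ t → p t ∈ Set.Ioc (0:ℝ) 1)
    {a : ℝ} (ha : 0 ≤ a) :
    IntegrableOn (fun s => Real.exp (-r * s) * beta n γ (p s) ^ (1 / γ)) (Set.Ioi a) := by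
  set M := max 1 ((n:ℝ) ^ (1 - γ)) with hM
  have hM1 : (1:ℝ) ≤ M := le_max_left _ _
  apply Integrable.mono' (g := fun s => M ^ (1/γ) * Real.exp (-r * s))
  · exact (exp_neg_integrableOn_Ioi a hr).const_mul _
  · exact ((continuous_F n hγ r hcont).aestronglyMeasurable).restrict
  · refine (ae_restrict_iff' measurableSet_Ioi).2 (Filter.Eventually.of_forall fun s hs => ?_)
    have hs0 : (0:ℝ) ≤ s := le_trans ha (le_of_lt hs)
    obtain ⟨hp0, hp1⟩ := hmem s hs0
    have hb0 : 0 ≤ beta n γ (p s) := (beta_pos hn hp0 hp1).le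
    have hb : beta n γ (p s) ≤ M := by
      refine le_trans (beta_le hn hp0.le hp1) ?_
      nlinarith
    have hrle : beta n γ (p s) ^ (1/γ) ≤ M ^ (1/γ) :=
      Real.rpow_le_rpow hb0 hb (by positivity)
    rw [Real.norm_eq_abs, abs_of_nonneg (mul_nonneg (Real.exp_pos _).le (Real.rpow_nonneg hb0 _))]
    calc Real.exp (-r*s) * beta n γ (p s) ^ (1/γ) ≤ Real.exp (-r*s) * M ^ (1/γ) :=
          mul_le_mul_of_nonneg_left hrle (Real.exp_pos _).le
      _ = M ^ (1/γ) * Real.exp (-r*s) := mul_comm _ _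

lemma setIntegral_F_pos {n : ℕ} (hn : 1 ≤ n) (γ : ℝ) {r : ℝ}
    {p : ℝ → ℝ} (hmem : ∀ t, 0 ≤ t → p t ∈ Set.Ioc (0:ℝ) 1)
    {S : Set ℝ} (hS : MeasurableSet S) (hSsub : S ⊆ Set.Ioi 0) (hSpos : 0 < volume S)
    (hInt : IntegrableOn (fun s => Real.exp (-r * s) * beta n γ (p s) ^ (1 / γ)) S) :
    0 < ∫ s in S, Real.exp (-r * s) * beta n γ (p s) ^ (1 / γ) := by
  have hpos : ∀ s ∈ S, 0 < Real.exp (-r * s) * beta n γ (p s) ^ (1 / γ) := fun s hs => by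
    obtain ⟨hp0, hp1⟩ := hmem s (le_of_lt (hSsub hs))
    exact mul_pos (Real.exp_pos _) (Real.rpow_pos_of_pos (beta_pos hn hp0 hp1) _)
  rw [setIntegral_pos_iff_support_of_nonneg_ae
    ((ae_restrict_iff' hS).2 (Filter.Eventually.of_forall fun s hs => (hpos s hs).le)) hInt]
  refine lt_of_lt_of_le hSpos (measure_mono fun s hs => ⟨?_, hs⟩)
  exact Function.mem_support.2 (ne_of_gt (hpos s hs))

lemma ratio_lt {A₁ B₁ A₂ B₂ c : ℝ} (hA₁ : 0 < A₁) (hB₁ : 0 < B₁) (hA₂ : 0 < A₂)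
    (hB₂ : 0 < B₂) (h1 : A₁ ≤ c * A₂) (h2 : c * B₂ < B₁) :
    A₁ / (A₁ + B₁) < A₂ / (A₂ + B₂) := by
  rw [div_lt_div_iff₀ (by linarith) (by linarith)]
  nlinarith [mul_le_mul_of_nonneg_right h1 hB₂.le, mul_lt_mul_of_pos_left h2 hA₂]


/-- if `R_{γ₁,γ₂}(p) = β_{n,γ₁}(p)^{1/γ₁} / β_{n,γ₂}(p)^{1/γ₂}` is decreasing
on `(0,1]`, then the more risk-averse optimal tontine depletes its capital more slowly:
`Δ_{n,γ₁}(t) < Δ_{n,γ₂}(t)` for every `t > 0`. -/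
theorem depletion_of_R_antitone
    (n : ℕ) (hn : 2 ≤ n) (γ₁ γ₂ : ℝ) (hγ₂ : 0 < γ₂) (hγ : γ₂ < γ₁)
    (r : ℝ) (hr : 0 < r)
    (p : ℝ → ℝ) (hcont : Continuous p) (hanti : StrictAntiOn p (Set.Ici 0))
    (hmem : ∀ t, 0 ≤ t → p t ∈ Set.Ioc (0 : ℝ) 1) (hp0 : p 0 = 1)
    (hlim : Filter.Tendsto p Filter.atTop (nhds 0))
    (hR : AntitoneOn (fun q => (beta n γ₁ q) ^ (1 / γ₁) / (beta n γ₂ q) ^ (1 / γ₂))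
      (Set.Ioc 0 1)) :
    ∀ t > 0, Delta n γ₁ r p t < Delta n γ₂ r p t := by
  intro t ht
  have hγ₁ : 0 < γ₁ := lt_trans hγ₂ hγ
  have hn1 : 1 ≤ n := le_trans one_le_two hn
  set f₁ : ℝ → ℝ := fun s => Real.exp (-r * s) * beta n γ₁ (p s) ^ (1 / γ₁) with hf₁
  set f₂ : ℝ → ℝ := fun s => Real.exp (-r * s) * beta n γ₂ (p s) ^ (1 / γ₂) with hf₂
  -- Delta as a ratio of set integrals
  have hD₁ : Delta n γ₁ r p t = (∫ s in Set.Ioc 0 t, f₁ s) / (∫ s in Set.Ioi 0, f₁ s) := by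
    simp only [hf₁]
    unfold Delta Dopt
    simp_rw [← mul_div_assoc]
    rw [intervalIntegral.integral_div, intervalIntegral.integral_of_le ht.le]
  have hD₂ : Delta n γ₂ r p t = (∫ s in Set.Ioc 0 t, f₂ s) / (∫ s in Set.Ioi 0, f₂ s) := by
    simp only [hf₂]
    unfold Delta Dopt
    simp_rw [← mul_div_assoc]
    rw [intervalIntegral.integral_div, intervalIntegral.integral_of_le ht.le]
  -- integrability
  have hI₁ : IntegrableOn f₁ (Set.Ioi 0) := integrableOn_F hn1 hγ₁ hr hcont hmem le_rfl
  have hI₂ : IntegrableOn f₂ (Set.Ioi 0) := integrableOn_F hn1 hγ₂ hr hcont hmem le_rfl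
  have hI₁t : IntegrableOn f₁ (Set.Ioi t) := hI₁.mono_set (Set.Ioi_subset_Ioi ht.le)
  have hI₂t : IntegrableOn f₂ (Set.Ioi t) := hI₂.mono_set (Set.Ioi_subset_Ioi ht.le)
  have hI₁c : IntegrableOn f₁ (Set.Ioc 0 t) := hI₁.mono_set Set.Ioc_subset_Ioi_self
  have hI₂c : IntegrableOn f₂ (Set.Ioc 0 t) := hI₂.mono_set Set.Ioc_subset_Ioi_self
  -- splitting
  have hsplit₁ : (∫ s in Set.Ioi 0, f₁ s) = (∫ s in Set.Ioc 0 t, f₁ s) + ∫ s in Set.Ioi t, f₁ s := by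
    rw [← Set.Ioc_union_Ioi_eq_Ioi ht.le]
    exact setIntegral_union (Set.Ioc_disjoint_Ioi le_rfl) measurableSet_Ioi hI₁c hI₁t
  have hsplit₂ : (∫ s in Set.Ioi 0, f₂ s) = (∫ s in Set.Ioc 0 t, f₂ s) + ∫ s in Set.Ioi t, f₂ s := by
    rw [← Set.Ioc_union_Ioi_eq_Ioi ht.le]
    exact setIntegral_union (Set.Ioc_disjoint_Ioi le_rfl) measurableSet_Ioi hI₂c hI₂t
  -- positivity
  have hvolc : 0 < volume (Set.Ioc (0:ℝ) t) := by
    rw [Real.volume_Ioc]; exact ENNReal.ofReal_pos.2 (by linarith)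
  have hvoli : 0 < volume (Set.Ioi t) := by rw [Real.volume_Ioi]; exact ENNReal.zero_lt_top
  have hA₁pos : 0 < ∫ s in Set.Ioc 0 t, f₁ s :=
    setIntegral_F_pos hn1 γ₁ hmem measurableSet_Ioc Set.Ioc_subset_Ioi_self hvolc hI₁c
  have hA₂pos : 0 < ∫ s in Set.Ioc 0 t, f₂ s :=
    setIntegral_F_pos hn1 γ₂ hmem measurableSet_Ioc Set.Ioc_subset_Ioi_self hvolc hI₂c
  have hB₁pos : 0 < ∫ s in Set.Ioi t, f₁ s :=
    setIntegral_F_pos hn1 γ₁ hmem measurableSet_Ioi (Set.Ioi_subset_Ioi ht.le) hvoli hI₁t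
  have hB₂pos : 0 < ∫ s in Set.Ioi t, f₂ s :=
    setIntegral_F_pos hn1 γ₂ hmem measurableSet_Ioi (Set.Ioi_subset_Ioi ht.le) hvoli hI₂t
  -- the comparison constant
  obtain ⟨hpt0, hpt1⟩ := hmem t ht.le
  set c : ℝ := beta n γ₁ (p t) ^ (1/γ₁) / beta n γ₂ (p t) ^ (1/γ₂) with hc
  have hcpos : 0 < c :=
    div_pos (Real.rpow_pos_of_pos (beta_pos hn1 hpt0 hpt1) _)
      (Real.rpow_pos_of_pos (beta_pos hn1 hpt0 hpt1) _)
  -- A bound : A₁ ≤ c * A₂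
  have hA : (∫ s in Set.Ioc 0 t, f₁ s) ≤ c * ∫ s in Set.Ioc 0 t, f₂ s := by
    have hpt : ∀ s ∈ Set.Ioc (0:ℝ) t, f₁ s ≤ c * f₂ s := by
      intro s hs
      obtain ⟨hs0, hst⟩ := hs
      obtain ⟨hps0, hps1⟩ := hmem s hs0.le
      have hle : p t ≤ p s := by
        rcases eq_or_lt_of_le hst with h | h
        · rw [h]
        · exact (hanti (Set.mem_Ici.2 hs0.le) (Set.mem_Ici.2 ht.le) h).le
      have hRle : beta n γ₁ (p s) ^ (1/γ₁) / beta n γ₂ (p s) ^ (1/γ₂) ≤ c :=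
        hR ⟨hpt0, hpt1⟩ ⟨hps0, hps1⟩ hle
      have h2pos : 0 < beta n γ₂ (p s) ^ (1/γ₂) :=
        Real.rpow_pos_of_pos (beta_pos hn1 hps0 hps1) _
      have hmul := (div_le_iff₀ h2pos).1 hRle
      simp only [hf₁, hf₂]
      calc Real.exp (-r*s) * beta n γ₁ (p s) ^ (1/γ₁)
          ≤ Real.exp (-r*s) * (c * beta n γ₂ (p s) ^ (1/γ₂)) :=
            mul_le_mul_of_nonneg_left hmul (Real.exp_pos _).le
        _ = c * (Real.exp (-r*s) * beta n γ₂ (p s) ^ (1/γ₂)) := by ring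
    calc (∫ s in Set.Ioc 0 t, f₁ s) ≤ ∫ s in Set.Ioc 0 t, c * f₂ s :=
        setIntegral_mono_on hI₁c (hI₂c.const_mul c) measurableSet_Ioc hpt
      _ = c * ∫ s in Set.Ioc 0 t, f₂ s := integral_const_mul c f₂
  -- strict B bound : c * B₂ < B₁
  have hnR : (0:ℝ) < n := by exact_mod_cast lt_of_lt_of_le two_pos hn
  set δ : ℝ := 1/γ₂ - 1/γ₁ with hδ
  have hδpos : 0 < δ := by
    have h1 : 1/γ₁ < 1/γ₂ := div_lt_div_of_pos_left one_pos hγ₂ hγ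
    simp only [hδ]; linarith
  set c₁ : ℝ := ((2:ℝ)⁻¹) ^ (n - 1) * (n:ℝ) ^ (1 - γ₁) with hc₁
  have hc₁pos : 0 < c₁ := by
    have := Real.rpow_pos_of_pos hnR (1 - γ₁)
    positivity
  set M₂ : ℝ := max 1 ((n:ℝ) ^ (1 - γ₂)) with hM₂
  have hM₂pos : 0 < M₂ := lt_of_lt_of_le one_pos (le_max_left _ _)
  set K : ℝ := c₁ ^ (1/γ₁) / M₂ ^ (1/γ₂) with hK
  have hKpos : 0 < K :=
    div_pos (Real.rpow_pos_of_pos hc₁pos _) (Real.rpow_pos_of_pos hM₂pos _)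
  set ε : ℝ := min (1/2) ((K/(c+1)) ^ (1/δ)) with hε
  have hεpos : 0 < ε :=
    lt_min (by norm_num) (Real.rpow_pos_of_pos (div_pos hKpos (by linarith)) _)
  -- key pointwise strict inequality for small q
  have key : ∀ q : ℝ, 0 < q → q < ε → c * beta n γ₂ q ^ (1/γ₂) < beta n γ₁ q ^ (1/γ₁) := by
    intro q hq0 hqε
    have hqhalf : q ≤ 1/2 := le_of_lt (lt_of_lt_of_le hqε (min_le_left _ _))
    have hq1 : q ≤ 1 := by linarith
    have h2 : beta n γ₂ q ^ (1/γ₂) ≤ (M₂ * q) ^ (1/γ₂) :=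
      Real.rpow_le_rpow (beta_pos hn1 hq0 hq1).le (beta_le hn1 hq0.le hq1) (by positivity)
    have h1 : (c₁ * q) ^ (1/γ₁) ≤ beta n γ₁ q ^ (1/γ₁) := by
      refine Real.rpow_le_rpow (by positivity) ?_ (by positivity)
      have := mul_le_mul_of_nonneg_left (theta_ge_of_le_half (γ := γ₁) hn1 hq0.le hqhalf) hq0.le
      calc c₁ * q = q * (((2:ℝ)⁻¹) ^ (n - 1) * (n:ℝ) ^ (1 - γ₁)) := by rw [hc₁]; ring
        _ ≤ q * theta n γ₁ q := this
        _ = beta n γ₁ q := rfl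
    have hqδ : q ^ δ < K / (c + 1) := by
      have h3 : q < (K/(c+1)) ^ (1/δ) := lt_of_lt_of_le hqε (min_le_right _ _)
      have h4 := Real.rpow_lt_rpow hq0.le h3 hδpos
      rwa [← Real.rpow_mul (le_of_lt (div_pos hKpos (by linarith))),
        one_div_mul_cancel (ne_of_gt hδpos), Real.rpow_one] at h4
    have hq2 : (M₂ * q) ^ (1/γ₂) = M₂ ^ (1/γ₂) * q ^ (1/γ₂) :=
      Real.mul_rpow hM₂pos.le hq0.le
    have hq1' : (c₁ * q) ^ (1/γ₁) = c₁ ^ (1/γ₁) * q ^ (1/γ₁) :=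
      Real.mul_rpow hc₁pos.le hq0.le
    have hsplitq : q ^ (1/γ₂) = q ^ (1/γ₁) * q ^ δ := by
      rw [← Real.rpow_add hq0]
      congr 1
      simp only [hδ]; ring
    have hM₂ne : M₂ ^ (1/γ₂) ≠ 0 := ne_of_gt (Real.rpow_pos_of_pos hM₂pos _)
    have hstep : c * M₂ ^ (1/γ₂) * q ^ δ < c₁ ^ (1/γ₁) := by
      have h4 : c * M₂ ^ (1/γ₂) * q ^ δ < c * M₂ ^ (1/γ₂) * (K/(c+1)) :=
        mul_lt_mul_of_pos_left hqδ (by positivity)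
      have h5 : c * M₂ ^ (1/γ₂) * (K/(c+1)) = c/(c+1) * c₁ ^ (1/γ₁) := by
        rw [hK]; field_simp
      have h6 : c/(c+1) * c₁ ^ (1/γ₁) < c₁ ^ (1/γ₁) :=
        mul_lt_of_lt_one_left (Real.rpow_pos_of_pos hc₁pos _)
          ((div_lt_one (by linarith)).2 (by linarith))
      linarith
    calc c * beta n γ₂ q ^ (1/γ₂) ≤ c * (M₂ ^ (1/γ₂) * (q ^ (1/γ₁) * q ^ δ)) := by
          rw [← hsplitq, ← hq2]; exact mul_le_mul_of_nonneg_left h2 hcpos.le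
      _ = (c * M₂ ^ (1/γ₂) * q ^ δ) * q ^ (1/γ₁) := by ring
      _ < c₁ ^ (1/γ₁) * q ^ (1/γ₁) :=
          mul_lt_mul_of_pos_right hstep (Real.rpow_pos_of_pos hq0 _)
      _ = (c₁ * q) ^ (1/γ₁) := hq1'.symm
      _ ≤ beta n γ₁ q ^ (1/γ₁) := h1
  -- find u₀ beyond t with p u₀ < ε
  obtain ⟨u₀, hu₀ge, hu₀ε⟩ :=
    ((Filter.eventually_ge_atTop (t+1)).and (hlim.eventually_lt_const hεpos)).exists
  have hu₀t : t < u₀ := by linarith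
  obtain ⟨hpu0, hpu1⟩ := hmem u₀ (by linarith)
  -- pointwise weak bound on Ioi t
  have hptIoi : ∀ u ∈ Set.Ioi t, c * f₂ u ≤ f₁ u := by
    intro u hu
    have hu' : t < u := hu
    obtain ⟨hpu0', hpu1'⟩ := hmem u (by linarith)
    have hle : p u ≤ p t := (hanti (Set.mem_Ici.2 ht.le) (Set.mem_Ici.2 (by linarith)) hu').le
    have hRge : c ≤ beta n γ₁ (p u) ^ (1/γ₁) / beta n γ₂ (p u) ^ (1/γ₂) :=
      hR ⟨hpu0', hpu1'⟩ ⟨hpt0, hpt1⟩ hle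
    have h2pos : 0 < beta n γ₂ (p u) ^ (1/γ₂) :=
      Real.rpow_pos_of_pos (beta_pos hn1 hpu0' hpu1') _
    have hmul := (le_div_iff₀ h2pos).1 hRge
    simp only [hf₁, hf₂]
    calc c * (Real.exp (-r*u) * beta n γ₂ (p u) ^ (1/γ₂))
        = Real.exp (-r*u) * (c * beta n γ₂ (p u) ^ (1/γ₂)) := by ring
      _ ≤ Real.exp (-r*u) * beta n γ₁ (p u) ^ (1/γ₁) :=
          mul_le_mul_of_nonneg_left hmul (Real.exp_pos _).le
  -- strict at u₀
  have hstrict : 0 < f₁ u₀ - c * f₂ u₀ := by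
    have hk := key (p u₀) hpu0 hu₀ε
    simp only [hf₁, hf₂]
    have := mul_lt_mul_of_pos_left hk (Real.exp_pos (-r*u₀))
    nlinarith [Real.exp_pos (-r*u₀)]
  -- positivity of the difference integral
  have hcontF₁ : Continuous f₁ := continuous_F n hγ₁ r hcont
  have hcontF₂ : Continuous f₂ := continuous_F n hγ₂ r hcont
  have hcontH : Continuous fun u => f₁ u - c * f₂ u := hcontF₁.sub (continuous_const.mul hcontF₂)
  have hHint : IntegrableOn (fun u => f₁ u - c * f₂ u) (Set.Ioi t) :=
    hI₁t.sub (hI₂t.const_mul c)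
  have hHpos : 0 < ∫ u in Set.Ioi t, (f₁ u - c * f₂ u) := by
    rw [setIntegral_pos_iff_support_of_nonneg_ae
      ((ae_restrict_iff' measurableSet_Ioi).2
        (Filter.Eventually.of_forall fun u hu => sub_nonneg.2 (hptIoi u hu))) hHint]
    have hOpen : IsOpen ({u | 0 < f₁ u - c * f₂ u} ∩ Set.Ioi t) :=
      (isOpen_lt continuous_const hcontH).inter isOpen_Ioi
    refine lt_of_lt_of_le (hOpen.measure_pos volume ⟨u₀, hstrict, hu₀t⟩)
      (measure_mono ?_)
    rintro x ⟨hx, hxt⟩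
    exact ⟨Function.mem_support.2 (ne_of_gt hx), hxt⟩
  have hB : c * (∫ s in Set.Ioi t, f₂ s) < ∫ s in Set.Ioi t, f₁ s := by
    have hsub := integral_sub hI₁t (hI₂t.const_mul c)
    rw [hsub, integral_const_mul] at hHpos
    linarith
  -- conclude
  rw [hD₁, hD₂, hsplit₁, hsplit₂]
  exact ratio_lt hA₁pos hB₁pos hA₂pos hB₂pos hA hB
end

section
/- Fix an integer n ≥ 2, a rate r > 0, and a survival function t ↦ ₜp_x : [0,∞) → (0,1] which is continuous, strictly decreasing, with ₀p_x = 1 and ₜp_x → 0 as t → ∞. If 0 < γ₂ ≤ 1 ≤ γ₁ with γ₁ ≠ γ₂, then Δ_{n,γ₁}(t) < Δ_{n,γ₂}(t) for every t > 0. -/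
/-!
With `N ~ Binomial(n, x)` one has `β_γ(x) = E[(N / n)^γ]`, a Bernstein polynomial in `x`.
The Bernstein derivative formula together with Bernoulli's inequality for `u ↦ u^γ`, applied
term by term, shows that the elasticity `x β_γ'(x) / β_γ(x)` is below `γ` for `γ > 1` and above
`γ` for `γ < 1`, while `β_1(x) = x`. So `β_γ(x)^{1/γ} / x` decreases in `x` for `γ > 1` and
increases for `γ < 1`, and since `ₛp_x` decreases in `s`, the ratio of the discounted payout
densities `e^{-rs} β_{γ₁}(ₛp_x)^{1/γ₁}` and `e^{-rs} β_{γ₂}(ₛp_x)^{1/γ₂}` strictly increases in `s`.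
A density that grows relative to another over time carries a smaller share of its mass on `[0, t]`.
-/

open MeasureTheory Real Finset

open Polynomial

noncomputable def bernsteinSum (m : ℕ) (w : ℕ → ℝ) : ℝ[X] :=
  ∑ k ∈ Finset.range (m + 1), C (w k) * bernsteinPolynomial ℝ m k

theorem bernsteinSum_const (m : ℕ) (c : ℝ) : bernsteinSum m (fun _ => c) = C c := by
  rw [bernsteinSum, ← Finset.mul_sum, bernsteinPolynomial.sum, mul_one]

theorem bernsteinSum_const_mul (m : ℕ) (c : ℝ) (w : ℕ → ℝ) :
    bernsteinSum m (fun k => c * w k) = C c * bernsteinSum m w := by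
  simp only [bernsteinSum, Finset.mul_sum, C_mul, mul_assoc]

theorem derivative_bernsteinSum (m : ℕ) (w : ℕ → ℝ) :
    derivative (bernsteinSum (m + 1) w) =
      ((m : ℝ[X]) + 1) * bernsteinSum m (fun k => w (k + 1) - w k) := by
  have hshift : ∑ k ∈ Finset.range (m + 1), C (w (k + 1)) * bernsteinPolynomial ℝ m (k + 1) =
      bernsteinSum m w - C (w 0) * bernsteinPolynomial ℝ m 0 := by
    rw [bernsteinSum, Finset.sum_range_succ, Finset.sum_range_succ',
      bernsteinPolynomial.eq_zero_of_lt ℝ m.lt_succ_self]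
    ring
  simp only [bernsteinSum, derivative_sum, derivative_C_mul]
  rw [Finset.sum_range_succ', bernsteinPolynomial.derivative_zero]
  simp only [bernsteinPolynomial.derivative_succ_aux, C_sub, sub_mul, mul_sub,
    Finset.sum_sub_distrib, Nat.add_sub_cancel, Nat.cast_succ, mul_left_comm (C _),
    ← Finset.mul_sum, hshift, bernsteinSum]
  ring

theorem bernsteinPolynomial_eval (m k : ℕ) (x : ℝ) :
    (bernsteinPolynomial ℝ m k).eval x = (m.choose k : ℝ) * x ^ k * (1 - x) ^ (m - k) := by
  simp [bernsteinPolynomial]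

theorem bernsteinPolynomial_eval_pos {m k : ℕ} (hk : k ≤ m) {x : ℝ} (hx : x ∈ Set.Ioo 0 1) :
    0 < (bernsteinPolynomial ℝ m k).eval x := by
  have : (0 : ℝ) < (m.choose k : ℝ) := by exact_mod_cast Nat.choose_pos hk
  have := hx.1
  have := sub_pos.2 hx.2
  rw [bernsteinPolynomial_eval]
  positivity

theorem bernsteinPolynomial_eval_nonneg (m k : ℕ) {x : ℝ} (hx : x ∈ Set.Icc 0 1) :
    0 ≤ (bernsteinPolynomial ℝ m k).eval x := by
  have := hx.1
  have := sub_nonneg.2 hx.2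
  rw [bernsteinPolynomial_eval]
  positivity

theorem bernsteinSum_eval_lt {m : ℕ} {w w' : ℕ → ℝ} (h : ∀ k ≤ m, w k < w' k) {x : ℝ}
    (hx : x ∈ Set.Ioo 0 1) : (bernsteinSum m w).eval x < (bernsteinSum m w').eval x := by
  simp only [bernsteinSum, eval_finsetSum, eval_mul, eval_C]
  refine Finset.sum_lt_sum_of_nonempty Finset.nonempty_range_add_one fun k hk => ?_
  have hk : k ≤ m := Nat.lt_succ_iff.mp (Finset.mem_range.mp hk)
  exact mul_lt_mul_of_pos_right (h k hk) (bernsteinPolynomial_eval_pos hk hx)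

theorem bernsteinSum_eval_le {m : ℕ} {w w' : ℕ → ℝ} (h : ∀ k ≤ m, w k ≤ w' k) {x : ℝ}
    (hx : x ∈ Set.Icc 0 1) : (bernsteinSum m w).eval x ≤ (bernsteinSum m w').eval x := by
  simp only [bernsteinSum, eval_finsetSum, eval_mul, eval_C]
  refine Finset.sum_le_sum fun k hk => ?_
  exact mul_le_mul_of_nonneg_right (h k (Nat.lt_succ_iff.mp (Finset.mem_range.mp hk)))
    (bernsteinPolynomial_eval_nonneg m k hx)

theorem rpow_sub_rpow_lt_mul_sub {γ u v : ℝ} (hγ : 1 < γ) (hv : 0 ≤ v) (hvu : v < u) :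
    u ^ γ - v ^ γ < γ * u ^ (γ - 1) * (u - v) := by
  have hu : 0 < u := hv.trans_lt hvu
  have h := one_add_mul_self_lt_rpow_one_add (s := v / u - 1)
    (by linarith [div_nonneg hv hu.le]) (sub_ne_zero.2 ((div_lt_one hu).2 hvu).ne) hγ
  rw [add_sub_cancel, Real.div_rpow hv hu.le, lt_div_iff₀ (by positivity)] at h
  rw [Real.rpow_sub_one hu.ne']
  field_simp at h ⊢
  linarith

theorem mul_sub_lt_rpow_sub_rpow {γ u v : ℝ} (hγ₀ : 0 < γ) (hγ : γ < 1) (hv : 0 ≤ v)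
    (hvu : v < u) : γ * u ^ (γ - 1) * (u - v) < u ^ γ - v ^ γ := by
  have hu : 0 < u := hv.trans_lt hvu
  have h := rpow_one_add_lt_one_add_mul_self (s := v / u - 1)
    (by linarith [div_nonneg hv hu.le]) (sub_ne_zero.2 ((div_lt_one hu).2 hvu).ne) hγ₀ hγ
  rw [add_sub_cancel, Real.div_rpow hv hu.le, div_lt_iff₀ (by positivity)] at h
  rw [Real.rpow_sub_one hu.ne']
  field_simp at h ⊢
  linarith

theorem intervalIntegral_div_integral_Ioi_lt {f g : ℝ → ℝ} {a t : ℝ} (hat : a < t)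
    (hf : IntegrableOn f (Set.Ioi a)) (hg : IntegrableOn g (Set.Ioi a))
    (hf₀ : ∀ s ∈ Set.Ioi a, 0 < f s) (hg₀ : ∀ s ∈ Set.Ioi a, 0 < g s)
    (hfg : StrictMonoOn (fun s => f s / g s) (Set.Ioi a)) :
    (∫ s in a..t, f s) / (∫ s in Set.Ioi a, f s) < (∫ s in a..t, g s) / ∫ s in Set.Ioi a, g s := by
  have hta : t ∈ Set.Ioi a := hat
  have hIoc : Set.Ioc a t ⊆ Set.Ioi a := Set.Ioc_subset_Ioi_self
  have hIoi : Set.Ioi t ⊆ Set.Ioi a := Set.Ioi_subset_Ioi hat.le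
  have hfi : IntervalIntegrable f volume a t :=
    (intervalIntegrable_iff_integrableOn_Ioc_of_le hat.le).2 (hf.mono_set hIoc)
  have hgi : IntervalIntegrable g volume a t :=
    (intervalIntegrable_iff_integrableOn_Ioc_of_le hat.le).2 (hg.mono_set hIoc)
  set c := f t / g t
  have hbefore : (∫ s in a..t, f s) < c * ∫ s in a..t, g s := by
    have h := intervalIntegral.intervalIntegral_pos_of_pos_on ((hgi.const_mul c).sub hfi)
      (fun s hs => ?_) hat
    · rwa [intervalIntegral.integral_sub (hgi.const_mul c) hfi,
        intervalIntegral.integral_const_mul, sub_pos] at h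
    have hs' : s ∈ Set.Ioi a := hs.1
    have := hfg hs' hta hs.2
    rw [div_lt_iff₀ (hg₀ s hs')] at this
    linarith
  have hafter : c * (∫ s in Set.Ioi t, g s) ≤ ∫ s in Set.Ioi t, f s := by
    rw [← integral_const_mul]
    refine setIntegral_mono_on ((hg.mono_set hIoi).const_mul c) (hf.mono_set hIoi)
      measurableSet_Ioi fun s hs => ?_
    have := hfg hta (hIoi hs) hs
    rw [lt_div_iff₀ (hg₀ s (hIoi hs))] at this
    exact this.le
  have hfA : 0 < ∫ s in a..t, f s :=
    intervalIntegral.intervalIntegral_pos_of_pos_on hfi (fun s hs => hf₀ s hs.1) hat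
  have hgA : 0 < ∫ s in a..t, g s :=
    intervalIntegral.intervalIntegral_pos_of_pos_on hgi (fun s hs => hg₀ s hs.1) hat
  have hfB : 0 ≤ ∫ s in Set.Ioi t, f s :=
    setIntegral_nonneg measurableSet_Ioi fun s hs => (hf₀ s (hIoi hs)).le
  have hgB : 0 < ∫ s in Set.Ioi t, g s := by
    rw [setIntegral_pos_iff_support_of_nonneg_ae
      (ae_restrict_of_forall_mem measurableSet_Ioi fun s hs => (hg₀ s (hIoi hs)).le)
      (hg.mono_set hIoi),
      Set.inter_eq_right.2 fun s hs => Function.mem_support.2 (hg₀ s (hIoi hs)).ne',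
      Real.volume_Ioi]
    exact ENNReal.zero_lt_top
  rw [← intervalIntegral.integral_interval_add_Ioi hf (hf.mono_set hIoi),
    ← intervalIntegral.integral_interval_add_Ioi hg (hg.mono_set hIoi),
    div_lt_div_iff₀ (by positivity) (by positivity)]
  nlinarith

theorem theta_eq_eval (m : ℕ) (γ x : ℝ) :
    theta (m + 1) γ x =
      (bernsteinSum m (fun k => (((k : ℝ) + 1) / ((m : ℝ) + 1)) ^ (γ - 1))).eval x := by
  simp only [theta, bernsteinSum, eval_finsetSum, eval_mul, eval_C, bernsteinPolynomial_eval,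
    Nat.add_sub_cancel, Nat.cast_succ]
  refine Finset.sum_congr rfl fun k _ => ?_
  rw [← inv_div, Real.inv_rpow (by positivity), ← Real.rpow_neg (by positivity), neg_sub]
  ring

theorem beta_eq_eval (m : ℕ) {γ : ℝ} (hγ : γ ≠ 0) (x : ℝ) :
    beta (m + 1) γ x = (bernsteinSum (m + 1) (fun j => ((j : ℝ) / ((m : ℝ) + 1)) ^ γ)).eval x := by
  rw [beta, theta_eq_eval]
  simp only [bernsteinSum, eval_finsetSum, eval_mul, eval_C, bernsteinPolynomial_eval]
  rw [Finset.sum_range_succ' _ (m + 1)]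
  simp only [Nat.cast_zero, zero_div, Real.zero_rpow hγ, zero_mul, add_zero, Finset.mul_sum]
  refine Finset.sum_congr rfl fun k _ => ?_
  have hchoose : ((k : ℝ) + 1) / ((m : ℝ) + 1) * ((m + 1).choose (k + 1) : ℝ) = m.choose k := by
    have h : ((m : ℝ) + 1) * m.choose k = (m + 1).choose (k + 1) * ((k : ℝ) + 1) := by
      exact_mod_cast Nat.add_one_mul_choose_eq m k
    field_simp
    linarith
  rw [Real.rpow_sub_one (by positivity), ← hchoose, Nat.add_sub_add_right]
  push_cast
  field_simp
  ring

theorem hasDerivAt_beta (m : ℕ) {γ : ℝ} (hγ : γ ≠ 0) (x : ℝ) :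
    HasDerivAt (beta (m + 1) γ)
      (((m : ℝ) + 1) * (bernsteinSum m (fun k =>
        (((k : ℝ) + 1) / ((m : ℝ) + 1)) ^ γ - ((k : ℝ) / ((m : ℝ) + 1)) ^ γ)).eval x) x := by
  have h := (bernsteinSum (m + 1) (fun j => ((j : ℝ) / ((m : ℝ) + 1)) ^ γ)).hasDerivAt x
  rw [derivative_bernsteinSum] at h
  simpa only [eval_mul, eval_add, eval_natCast, eval_one, Nat.cast_succ,
    ← beta_eq_eval m hγ] using h

theorem beta_pos_s11 (m : ℕ) (γ : ℝ) {x : ℝ} (hx : x ∈ Set.Ioo 0 1) : 0 < beta (m + 1) γ x := by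
  have htheta : 0 < theta (m + 1) γ x := by
    have h := bernsteinSum_eval_lt (w := fun _ => 0)
      (fun k _ => by positivity : ∀ k ≤ m, (0 : ℝ) < (((k : ℝ) + 1) / ((m : ℝ) + 1)) ^ (γ - 1)) hx
    rwa [bernsteinSum_const, eval_C, ← theta_eq_eval] at h
  exact mul_pos hx.1 htheta

theorem beta_le_one (m : ℕ) {γ : ℝ} (hγ : 0 < γ) {x : ℝ} (hx : x ∈ Set.Icc 0 1) :
    beta (m + 1) γ x ≤ 1 := by
  have h := bernsteinSum_eval_le (w' := fun _ => 1) (fun j hj => Real.rpow_le_one (by positivity)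
    ((div_le_one (by positivity)).2 (by exact_mod_cast hj)) hγ.le :
      ∀ j ≤ m + 1, ((j : ℝ) / ((m : ℝ) + 1)) ^ γ ≤ 1) hx
  rwa [bernsteinSum_const, eval_C, ← beta_eq_eval m hγ.ne'] at h

theorem beta_one (m : ℕ) (x : ℝ) : beta (m + 1) 1 x = x := by
  simp only [beta, theta_eq_eval, sub_self, Real.rpow_zero, bernsteinSum_const, eval_C, mul_one]

theorem mul_deriv_beta_lt (m : ℕ) {γ : ℝ} (hγ : 1 < γ) {x : ℝ} (hx : x ∈ Set.Ioo 0 1) :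
    x * deriv (beta (m + 1) γ) x < γ * beta (m + 1) γ x := by
  have hweight : ∀ k ≤ m,
      ((m : ℝ) + 1) * ((((k : ℝ) + 1) / ((m : ℝ) + 1)) ^ γ - ((k : ℝ) / ((m : ℝ) + 1)) ^ γ) <
        γ * (((k : ℝ) + 1) / ((m : ℝ) + 1)) ^ (γ - 1) := fun k _ => by
    have h := rpow_sub_rpow_lt_mul_sub hγ (by positivity : 0 ≤ (k : ℝ) / ((m : ℝ) + 1))
      (div_lt_div_of_pos_right (lt_add_one (k : ℝ)) (by positivity))
    rw [← sub_div, add_sub_cancel_left] at h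
    field_simp at h ⊢
    linarith
  have h := bernsteinSum_eval_lt hweight hx
  rw [bernsteinSum_const_mul, bernsteinSum_const_mul, eval_mul, eval_mul, eval_C, eval_C,
    ← theta_eq_eval] at h
  rw [(hasDerivAt_beta m (by positivity) x).deriv, beta, mul_left_comm γ]
  exact mul_lt_mul_of_pos_left h hx.1

theorem mul_deriv_beta_gt (m : ℕ) {γ : ℝ} (hγ₀ : 0 < γ) (hγ : γ < 1) {x : ℝ}
    (hx : x ∈ Set.Ioo 0 1) : γ * beta (m + 1) γ x < x * deriv (beta (m + 1) γ) x := by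
  have hweight : ∀ k ≤ m, γ * (((k : ℝ) + 1) / ((m : ℝ) + 1)) ^ (γ - 1) <
      ((m : ℝ) + 1) * ((((k : ℝ) + 1) / ((m : ℝ) + 1)) ^ γ - ((k : ℝ) / ((m : ℝ) + 1)) ^ γ) :=
    fun k _ => by
    have h := mul_sub_lt_rpow_sub_rpow hγ₀ hγ (by positivity : 0 ≤ (k : ℝ) / ((m : ℝ) + 1))
      (div_lt_div_of_pos_right (lt_add_one (k : ℝ)) (by positivity))
    rw [← sub_div, add_sub_cancel_left] at h
    field_simp at h ⊢
    linarith
  have h := bernsteinSum_eval_lt hweight hx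
  rw [bernsteinSum_const_mul, bernsteinSum_const_mul, eval_mul, eval_mul, eval_C, eval_C,
    ← theta_eq_eval] at h
  rw [(hasDerivAt_beta m hγ₀.ne' x).deriv, beta, mul_left_comm γ]
  exact mul_lt_mul_of_pos_left h hx.1

theorem hasDerivAt_log_beta_div_sub_log (m : ℕ) {γ : ℝ} (hγ : γ ≠ 0) {x : ℝ}
    (hx : x ∈ Set.Ioo 0 1) :
    HasDerivAt (fun y => log (beta (m + 1) γ y) / γ - log y)
      ((x * deriv (beta (m + 1) γ) x - γ * beta (m + 1) γ x) / (γ * x * beta (m + 1) γ x)) x := by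
  have hβ := beta_pos_s11 m γ hx
  have h :=
    (((hasDerivAt_beta m hγ x).log hβ.ne').div_const γ).fun_sub (hasDerivAt_log hx.1.ne')
  rw [← (hasDerivAt_beta m hγ x).deriv] at h
  refine h.congr_deriv ?_
  have := hx.1
  field_simp

theorem strictAntiOn_log_beta_div_sub_log (m : ℕ) {γ : ℝ} (hγ : 1 < γ) :
    StrictAntiOn (fun x => log (beta (m + 1) γ x) / γ - log x) (Set.Ioo 0 1) := by
  have hderiv := fun x (hx : x ∈ Set.Ioo (0 : ℝ) 1) =>
    hasDerivAt_log_beta_div_sub_log m (by positivity) hx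
  refine strictAntiOn_of_deriv_neg (convex_Ioo 0 1)
    (fun x hx => (hderiv x hx).continuousAt.continuousWithinAt) fun x hx => ?_
  rw [interior_Ioo] at hx
  rw [(hderiv x hx).deriv]
  have := beta_pos_s11 m γ hx
  exact div_neg_of_neg_of_pos (sub_neg.2 (mul_deriv_beta_lt m hγ hx))
    (by have := hx.1; positivity)

theorem strictMonoOn_log_beta_div_sub_log (m : ℕ) {γ : ℝ} (hγ₀ : 0 < γ) (hγ : γ < 1) :
    StrictMonoOn (fun x => log (beta (m + 1) γ x) / γ - log x) (Set.Ioo 0 1) := by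
  have hderiv := fun x (hx : x ∈ Set.Ioo (0 : ℝ) 1) =>
    hasDerivAt_log_beta_div_sub_log m hγ₀.ne' hx
  refine strictMonoOn_of_deriv_pos (convex_Ioo 0 1)
    (fun x hx => (hderiv x hx).continuousAt.continuousWithinAt) fun x hx => ?_
  rw [interior_Ioo] at hx
  rw [(hderiv x hx).deriv]
  have := beta_pos_s11 m γ hx
  exact div_pos (sub_pos.2 (mul_deriv_beta_gt m hγ₀ hγ hx)) (by have := hx.1; positivity)

theorem strictAntiOn_beta_rpow_inv_div (m : ℕ) {γ₁ γ₂ : ℝ} (hγ₂ : 0 < γ₂) (hγ₂1 : γ₂ ≤ 1)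
    (hγ₁ : 1 ≤ γ₁) (hne : γ₁ ≠ γ₂) :
    StrictAntiOn (fun x => beta (m + 1) γ₁ x ^ (1 / γ₁) / beta (m + 1) γ₂ x ^ (1 / γ₂))
      (Set.Ioo 0 1) := by
  set G := fun γ x => log (beta (m + 1) γ x) / γ - log x with hG
  have hG_one : ∀ x, G 1 x = 0 := fun x => by simp [hG, beta_one]
  have hdiff : StrictAntiOn (fun x => G γ₁ x - G γ₂ x) (Set.Ioo 0 1) := by
    intro x hx y hy hxy
    rcases hγ₁.eq_or_lt with rfl | h₁ <;> rcases hγ₂1.eq_or_lt with rfl | h₂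
    · exact absurd rfl hne
    · linarith [hG_one x, hG_one y, strictMonoOn_log_beta_div_sub_log m hγ₂ h₂ hx hy hxy]
    · linarith [hG_one x, hG_one y, strictAntiOn_log_beta_div_sub_log m h₁ hx hy hxy]
    · linarith [strictMonoOn_log_beta_div_sub_log m hγ₂ h₂ hx hy hxy,
        strictAntiOn_log_beta_div_sub_log m h₁ hx hy hxy]
  refine (exp_strictMono.comp_strictAntiOn hdiff).congr fun x hx => ?_
  simp only [Function.comp, hG, rpow_def_of_pos (beta_pos_s11 m _ hx), ← exp_sub]
  ring_nf

noncomputable def discountedPayout (n : ℕ) (γ r : ℝ) (p : ℝ → ℝ) (s : ℝ) : ℝ :=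
  exp (-r * s) * beta n γ (p s) ^ (1 / γ)

theorem Delta_eq_div (n : ℕ) (γ r : ℝ) (p : ℝ → ℝ) (t : ℝ) :
    Delta n γ r p t = (∫ s in (0 : ℝ)..t, discountedPayout n γ r p s) /
      ∫ s in Set.Ioi (0 : ℝ), discountedPayout n γ r p s := by
  simp only [Delta, Dopt, discountedPayout, mul_div_assoc']
  exact intervalIntegral.integral_div _ _

theorem discountedPayout_pos {p : ℝ → ℝ} (hp : Set.MapsTo p (Set.Ioi 0) (Set.Ioo 0 1)) (m : ℕ)
    (γ r : ℝ) {s : ℝ} (hs : s ∈ Set.Ioi 0) :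
    0 < discountedPayout (m + 1) γ r p s := by
  have := beta_pos_s11 m γ (hp hs)
  unfold discountedPayout
  positivity

theorem integrableOn_discountedPayout {p : ℝ → ℝ}
    (hp : Set.MapsTo p (Set.Ioi 0) (Set.Ioo 0 1)) (m : ℕ) {γ r : ℝ} (hγ : 0 < γ) (hr : 0 < r)
    (hcont : Continuous p) : IntegrableOn (discountedPayout (m + 1) γ r p) (Set.Ioi 0) := by
  have hβ : Continuous (beta (m + 1) γ) := by
    unfold beta theta
    fun_prop
  refine Integrable.mono' (exp_neg_integrableOn_Ioi 0 hr)
    (ContinuousOn.aestronglyMeasurable ?_ measurableSet_Ioi)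
    (ae_restrict_of_forall_mem measurableSet_Ioi fun s hs => ?_)
  · exact (by fun_prop : Continuous fun s => exp (-r * s)).continuousOn.mul
      ((hβ.comp hcont).continuousOn.rpow_const fun s hs => Or.inl (beta_pos_s11 m γ (hp hs)).ne')
  · rw [Real.norm_of_nonneg (discountedPayout_pos hp m γ r hs).le]
    exact mul_le_of_le_one_right (exp_pos _).le (rpow_le_one (beta_pos_s11 m γ (hp hs)).le
      (beta_le_one m hγ (Set.Ioo_subset_Icc_self (hp hs))) (by positivity))

theorem strictMonoOn_discountedPayout_div {p : ℝ → ℝ}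
    (hp : Set.MapsTo p (Set.Ioi 0) (Set.Ioo 0 1)) (hanti : StrictAntiOn p (Set.Ioi 0)) (m : ℕ)
    {γ₁ γ₂ : ℝ} (hγ₂ : 0 < γ₂) (hγ₂1 : γ₂ ≤ 1) (hγ₁ : 1 ≤ γ₁) (hne : γ₁ ≠ γ₂) (r : ℝ) :
    StrictMonoOn (fun s => discountedPayout (m + 1) γ₁ r p s / discountedPayout (m + 1) γ₂ r p s)
      (Set.Ioi 0) :=
  ((strictAntiOn_beta_rpow_inv_div m hγ₂ hγ₂1 hγ₁ hne).comp hanti hp).congr fun _ _ =>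
    (mul_div_mul_left _ _ (exp_pos _).ne').symm

theorem depletion_across_one_general
    (n : ℕ) (hn : 2 ≤ n) (γ₁ γ₂ : ℝ) (hγ₂ : 0 < γ₂) (hγ₂1 : γ₂ ≤ 1) (hγ₁ : 1 ≤ γ₁)
    (hne : γ₁ ≠ γ₂)
    (r : ℝ) (hr : 0 < r)
    (p : ℝ → ℝ) (hcont : Continuous p) (hanti : StrictAntiOn p (Set.Ici 0))
    (hmem : ∀ t, 0 ≤ t → p t ∈ Set.Ioc (0 : ℝ) 1) (hp0 : p 0 = 1) :
    ∀ t > 0, Delta n γ₁ r p t < Delta n γ₂ r p t := by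
  intro t ht
  obtain ⟨m, rfl⟩ : ∃ m, n = m + 1 := ⟨n - 1, by omega⟩
  have hγ₁₀ : 0 < γ₁ := by linarith
  have hanti' : StrictAntiOn p (Set.Ioi 0) := hanti.mono Set.Ioi_subset_Ici_self
  have hp : Set.MapsTo p (Set.Ioi 0) (Set.Ioo 0 1) := fun s hs =>
    ⟨(hmem s (le_of_lt hs)).1, hp0 ▸ hanti Set.self_mem_Ici (Set.mem_Ici.2 (le_of_lt hs)) hs⟩
  rw [Delta_eq_div, Delta_eq_div]
  exact intervalIntegral_div_integral_Ioi_lt ht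
    (integrableOn_discountedPayout hp m hγ₁₀ hr hcont)
    (integrableOn_discountedPayout hp m hγ₂ hr hcont)
    (fun _ hs => discountedPayout_pos hp m γ₁ r hs) (fun _ hs => discountedPayout_pos hp m γ₂ r hs)
    (strictMonoOn_discountedPayout_div hp hanti' m hγ₂ hγ₂1 hγ₁ hne r)

/-- if `0 < γ₂ ≤ 1 ≤ γ₁` and `γ₁ ≠ γ₂`, then `Δ_{n,γ₁}(t) < Δ_{n,γ₂}(t)`
for every `t > 0`. -/
theorem depletion_across_one
    (n : ℕ) (hn : 2 ≤ n) (γ₁ γ₂ : ℝ) (hγ₂ : 0 < γ₂) (hγ₂1 : γ₂ ≤ 1) (hγ₁ : 1 ≤ γ₁)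
    (hne : γ₁ ≠ γ₂)
    (r : ℝ) (hr : 0 < r)
    (p : ℝ → ℝ) (hcont : Continuous p) (hanti : StrictAntiOn p (Set.Ici 0))
    (hmem : ∀ t, 0 ≤ t → p t ∈ Set.Ioc (0 : ℝ) 1) (hp0 : p 0 = 1)
    (hlim : Filter.Tendsto p Filter.atTop (nhds 0)) :
    ∀ t > 0, Delta n γ₁ r p t < Delta n γ₂ r p t :=
  depletion_across_one_general n hn γ₁ γ₂ hγ₂ hγ₂1 hγ₁ hne r hr p hcont hanti hmem hp0
end
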